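/- arXiv:2603.13122 — 11 statements merged into one kernel-verified Lean document; each statement's English description precedes it below -/
import Mathlib

section
/- Let γ ∈ (0,1], σ > 0, and define z_u(x) = (γ(σ + 2x²) + √(γ²(σ + x²)² + 4γx²)) / (2γx) for x ≠ 0. Then |z_u(x)| > 1 for all x ≠ 0. -/
theorem stmt_0 (γ σ : ℝ) (hγ0 : 0 < γ) (hγ1 : γ ≤ 1) (hσ : 0 < σ) :
    ∀ x : ℝ, x ≠ 0 →
      1 < |(γ * (σ + 2 * x ^ 2) + Real.sqrt (γ ^ 2 * (σ + x ^ 2) ^ 2 + 4 * γ * x ^ 2))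
            / (2 * γ * x)| := by
  intro x hx
  have hx2 : 0 < x ^ 2 := by positivity
  have habs : 0 < |x| := abs_pos.mpr hx
  have hden : 0 < |2 * γ * x| := by positivity
  have hdeq : |2 * γ * x| = 2 * γ * |x| := by
    rw [abs_mul, abs_of_pos (by linarith : (0:ℝ) < 2 * γ)]
  have hsq : (2 * γ * |x|) ^ 2 ≤ γ ^ 2 * (σ + x ^ 2) ^ 2 + 4 * γ * x ^ 2 := by
    have h1 : (2 * γ * |x|) ^ 2 = 4 * (γ * γ) * x ^ 2 := by
      rw [mul_pow, mul_pow, sq_abs]; ring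
    have h2 : γ * γ ≤ γ := by nlinarith
    nlinarith [sq_nonneg (γ * (σ + x ^ 2))]
  have hsqrt : 2 * γ * |x| ≤ Real.sqrt (γ ^ 2 * (σ + x ^ 2) ^ 2 + 4 * γ * x ^ 2) := by
    have := Real.sqrt_le_sqrt hsq
    rwa [Real.sqrt_sq (by positivity)] at this
  have hnum : 2 * γ * |x| < γ * (σ + 2 * x ^ 2) +
      Real.sqrt (γ ^ 2 * (σ + x ^ 2) ^ 2 + 4 * γ * x ^ 2) := by
    nlinarith
  have hnumpos : 0 < γ * (σ + 2 * x ^ 2) +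
      Real.sqrt (γ ^ 2 * (σ + x ^ 2) ^ 2 + 4 * γ * x ^ 2) := by
    have : 0 ≤ Real.sqrt (γ ^ 2 * (σ + x ^ 2) ^ 2 + 4 * γ * x ^ 2) := Real.sqrt_nonneg _
    nlinarith
  rw [abs_div, one_lt_div hden, abs_of_pos hnumpos, hdeq]
  exact hnum
end

section
/- Let γ ∈ (0,1], σ > 0. Define h₋(x) = (σ - x(2a + x))/(2x) - √(γ²(σ + x²)² + 4γx²)/(2γx) for x ≠ 0. Then the derivative h₋'(x) is strictly negative for all x ≠ 0; in particular h₋ is strictly decreasing on (-∞,0) and on (0,∞). -/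
/-!
Writing `s = √(γ²(σ + x²)² + 4γx²)`, the quotient rule gives
`h₋'(x) = -(σ + x²) (s + γ (x² - σ)) / (2 x² s)`.
Dropping `4γx²` under the root gives `s ≥ γ(σ + x²)`, so `s + γ(x² - σ) ≥ 2γx² > 0`,
and the derivative is negative wherever `x ≠ 0`.
-/

open Real

namespace BestResponseRoot

def disc (γ σ x : ℝ) : ℝ := γ ^ 2 * (σ + x ^ 2) ^ 2 + 4 * γ * x ^ 2

/-- The stable root `h₋` of player `i`'s best-response equation. -/
noncomputable def root (γ σ a x : ℝ) : ℝ :=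
  (σ - x * (2 * a + x)) / (2 * x) - √(disc γ σ x) / (2 * γ * x)

variable {γ σ a x : ℝ}

lemma disc_pos (hγ : 0 < γ) (hx : x ≠ 0) : 0 < disc γ σ x := by
  unfold disc
  positivity

lemma sqrt_disc_pos (hγ : 0 < γ) (hx : x ≠ 0) : 0 < √(disc γ σ x) :=
  sqrt_pos.mpr (disc_pos hγ hx)

lemma le_sqrt_disc (hγ : 0 ≤ γ) : γ * (σ + x ^ 2) ≤ √(disc γ σ x) :=
  (le_abs_self _).trans <| abs_le_sqrt <| by unfold disc; nlinarith [sq_nonneg x]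

lemma hasDerivAt_disc (γ σ x : ℝ) :
    HasDerivAt (disc γ σ) (4 * γ ^ 2 * x * (σ + x ^ 2) + 8 * γ * x) x := by
  refine (((((hasDerivAt_pow 2 x).const_add σ).pow 2).const_mul (γ ^ 2)).add
    ((hasDerivAt_pow 2 x).const_mul (4 * γ))).congr_deriv ?_
  push_cast
  ring

lemma hasDerivAt_rational_part (hx : x ≠ 0) :
    HasDerivAt (fun y => (σ - y * (2 * a + y)) / (2 * y)) (-(σ + x ^ 2) / (2 * x ^ 2)) x := by
  have hnum : HasDerivAt (fun y => σ - y * (2 * a + y)) (-(2 * a) - 2 * x) x := by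
    refine (((hasDerivAt_id' x).mul ((hasDerivAt_id' x).const_add (2 * a))).const_sub
      σ).congr_deriv ?_
    ring
  refine (hnum.div ((hasDerivAt_id' x).const_mul 2) (mul_ne_zero two_ne_zero hx)).congr_deriv ?_
  field_simp
  ring

lemma hasDerivAt_sqrt_part (hγ : 0 < γ) (hx : x ≠ 0) :
    HasDerivAt (fun y => √(disc γ σ y) / (2 * γ * y))
      (γ * (σ + x ^ 2) * (x ^ 2 - σ) / (2 * x ^ 2 * √(disc γ σ x))) x := by
  have hQ := disc_pos (σ := σ) hγ hx
  have hs := sqrt_disc_pos (σ := σ) hγ hx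
  have hs2 := sq_sqrt hQ.le
  refine (((hasDerivAt_disc γ σ x).sqrt hQ.ne').div ((hasDerivAt_id' x).const_mul (2 * γ))
    (mul_ne_zero (by positivity) hx)).congr_deriv ?_
  generalize √(disc γ σ x) = s at hs hs2 ⊢
  unfold disc at hs2
  field_simp
  linear_combination -2 * hs2

lemma hasDerivAt_root (hγ : 0 < γ) (hx : x ≠ 0) :
    HasDerivAt (root γ σ a)
      (-(σ + x ^ 2) * (√(disc γ σ x) + γ * (x ^ 2 - σ)) / (2 * x ^ 2 * √(disc γ σ x))) x := by
  have hs := sqrt_disc_pos (σ := σ) hγ hx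
  refine ((hasDerivAt_rational_part (a := a) hx).sub (hasDerivAt_sqrt_part hγ hx)).congr_deriv ?_
  field_simp
  ring

lemma deriv_root_neg (hγ : 0 < γ) (hσ : 0 < σ) (hx : x ≠ 0) : deriv (root γ σ a) x < 0 := by
  rw [(hasDerivAt_root hγ hx).deriv]
  have hx2 : 0 < x ^ 2 := by positivity
  have hs := sqrt_disc_pos (σ := σ) hγ hx
  have hfactor : 0 < √(disc γ σ x) + γ * (x ^ 2 - σ) := by
    nlinarith [le_sqrt_disc (σ := σ) (x := x) hγ.le, mul_pos hγ hx2]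
  exact div_neg_of_neg_of_pos (mul_neg_of_neg_of_pos (by linarith) hfactor) (by positivity)

lemma strictAntiOn_root (hγ : 0 < γ) (hσ : 0 < σ) {D : Set ℝ} (hD : Convex ℝ D)
    (h0 : (0 : ℝ) ∉ D) : StrictAntiOn (root γ σ a) D := by
  have hne : ∀ x ∈ D, x ≠ 0 := fun x hx h => h0 (h ▸ hx)
  exact strictAntiOn_of_deriv_neg hD
    (fun x hx => (hasDerivAt_root hγ (hne x hx)).continuousAt.continuousWithinAt)
    (fun x hx => deriv_root_neg hγ hσ (hne x (interior_subset hx)))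

end BestResponseRoot

open BestResponseRoot in
theorem stmt_3_general (γ σ a : ℝ) (hγ0 : 0 < γ) (hσ : 0 < σ) :
    let h : ℝ → ℝ := fun x =>
      (σ - x * (2 * a + x)) / (2 * x)
        - Real.sqrt (γ ^ 2 * (σ + x ^ 2) ^ 2 + 4 * γ * x ^ 2) / (2 * γ * x)
    (∀ x : ℝ, x ≠ 0 → deriv h x < 0) ∧
      StrictAntiOn h (Set.Iio 0) ∧ StrictAntiOn h (Set.Ioi 0) :=
  ⟨fun _ hx => deriv_root_neg hγ0 hσ hx,
    strictAntiOn_root hγ0 hσ (convex_Iio 0) Set.self_notMem_Iio,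
    strictAntiOn_root hγ0 hσ (convex_Ioi 0) Set.self_notMem_Ioi⟩

theorem stmt_3 (γ σ a : ℝ) (hγ0 : 0 < γ) (hγ1 : γ ≤ 1) (hσ : 0 < σ) :
    let h : ℝ → ℝ := fun x =>
      (σ - x * (2 * a + x)) / (2 * x)
        - Real.sqrt (γ ^ 2 * (σ + x ^ 2) ^ 2 + 4 * γ * x ^ 2) / (2 * γ * x)
    (∀ x : ℝ, x ≠ 0 → deriv h x < 0) ∧
      StrictAntiOn h (Set.Iio 0) ∧ StrictAntiOn h (Set.Ioi 0) :=
  stmt_3_general γ σ a hγ0 hσ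
end

section
/- Let a > 0, γ ∈ (0,1], σ > 0. Set n = γa² + γσ + 1 and δ = n² - 4γa². Then δ = γ²(a²+σ)² - 2γa² + 2γσ + 1 > 0, and of the two roots x̄± = (n - 2γa² ± √δ)/(2γa) of the quadratic γa·x² + x(γa² - γσ - 1) - γaσ = 0, only x̄₋ satisfies |x̄ + a| ≤ √(a² + σ), while |x̄₊ + a| > √(a² + σ). -/
theorem stmt_5 (a γ σ : ℝ) (ha : 0 < a) (hγ0 : 0 < γ) (hγ1 : γ ≤ 1) (hσ : 0 < σ) :
    let n : ℝ := γ * a ^ 2 + γ * σ + 1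
    let δ : ℝ := n ^ 2 - 4 * γ * a ^ 2
    let xm : ℝ := (n - 2 * γ * a ^ 2 - Real.sqrt δ) / (2 * γ * a)
    let xp : ℝ := (n - 2 * γ * a ^ 2 + Real.sqrt δ) / (2 * γ * a)
    δ = γ ^ 2 * (a ^ 2 + σ) ^ 2 - 2 * γ * a ^ 2 + 2 * γ * σ + 1 ∧
      0 < δ ∧
      γ * a * xm ^ 2 + xm * (γ * a ^ 2 - γ * σ - 1) - γ * a * σ = 0 ∧
      γ * a * xp ^ 2 + xp * (γ * a ^ 2 - γ * σ - 1) - γ * a * σ = 0 ∧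
      |xm + a| ≤ Real.sqrt (a ^ 2 + σ) ∧
      |xp + a| > Real.sqrt (a ^ 2 + σ) := by
  intro n δ xm xp
  have hn : n = γ * a ^ 2 + γ * σ + 1 := rfl
  have hδ : δ = n ^ 2 - 4 * γ * a ^ 2 := rfl
  have hδpos : 0 < δ := by
    rw [hδ, hn]; nlinarith [sq_nonneg (γ * (a ^ 2 + σ) - 1), mul_pos hγ0 hσ]
  have hr0 : 0 ≤ Real.sqrt δ := Real.sqrt_nonneg _
  have hr : Real.sqrt δ ^ 2 = δ := Real.sq_sqrt hδpos.le
  set r := Real.sqrt δ with hrdef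
  have hs0 : 0 ≤ Real.sqrt (a ^ 2 + σ) := Real.sqrt_nonneg _
  have hs2 : Real.sqrt (a ^ 2 + σ) ^ 2 = a ^ 2 + σ := Real.sq_sqrt (by positivity)
  set s := Real.sqrt (a ^ 2 + σ) with hsdef
  have hsa : a < s := by nlinarith
  have hga : (0:ℝ) < 2 * γ * a := by positivity
  have hga' : (2 * γ * a : ℝ) ≠ 0 := ne_of_gt hga
  have hxm : xm = (n - 2 * γ * a ^ 2 - r) / (2 * γ * a) := rfl
  have hxp : xp = (n - 2 * γ * a ^ 2 + r) / (2 * γ * a) := rfl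
  have hrδ : r ^ 2 = n ^ 2 - 4 * γ * a ^ 2 := by rw [hr, hδ]
  have hnpos : 0 < n := by rw [hn]; positivity
  have hrn : r < n := by nlinarith
  refine ⟨by rw [hδ, hn]; ring, hδpos, ?_, ?_, ?_, ?_⟩
  · have e : xm * (2 * γ * a) = n - 2 * γ * a ^ 2 - r := by
      rw [hxm]; field_simp
    have h4 : (γ * a * xm ^ 2 + xm * (γ * a ^ 2 - γ * σ - 1) - γ * a * σ) * (4 * γ * a) = 0 := by
      linear_combination (2 * γ * a * xm - (n - 2 * γ * a ^ 2) - r) * e + hrδ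
    exact (mul_eq_zero.mp h4).resolve_right (by positivity)
  · have e : xp * (2 * γ * a) = n - 2 * γ * a ^ 2 + r := by
      rw [hxp]; field_simp
    have h4 : (γ * a * xp ^ 2 + xp * (γ * a ^ 2 - γ * σ - 1) - γ * a * σ) * (4 * γ * a) = 0 := by
      linear_combination (2 * γ * a * xp - (n - 2 * γ * a ^ 2) + r) * e + hrδ
    exact (mul_eq_zero.mp h4).resolve_right (by positivity)
  · have h1 : xm + a = (n - r) / (2 * γ * a) := by rw [hxm]; field_simp; ring
    have h2 : 0 ≤ xm + a := by
      rw [h1]; exact div_nonneg (by linarith) hga.le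
    rw [abs_of_nonneg h2, h1, div_le_iff₀ hga]
    have hkey : r ^ 2 = (n - 2 * γ * a * s) ^ 2 + 4 * γ * a * (s - a) * (1 + γ * s ^ 2) := by
      linear_combination hrδ - 4 * γ ^ 2 * a * s * hs2
    have hP : 0 < 4 * γ * a * (s - a) * (1 + γ * s ^ 2) :=
      mul_pos (mul_pos (by positivity) (sub_pos.2 hsa)) (by positivity)
    nlinarith [hkey, hP, hr0]
  · have h1 : xp + a = (n + r) / (2 * γ * a) := by rw [hxp]; field_simp; ring
    have h2 : 0 < xp + a := by
      rw [h1]; exact div_pos (by linarith) hga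
    rw [gt_iff_lt, abs_of_pos h2, h1, lt_div_iff₀ hga]
    have hkey : r ^ 2 = (n - 2 * γ * a * s) ^ 2 + 4 * γ * a * (s - a) * (1 + γ * s ^ 2) := by
      linear_combination hrδ - 4 * γ ^ 2 * a * s * hs2
    have hP : 0 < 4 * γ * a * (s - a) * (1 + γ * s ^ 2) :=
      mul_pos (mul_pos (by positivity) (sub_pos.2 hsa)) (by positivity)
    have hrpos : 0 < r := Real.sqrt_pos.2 hδpos
    nlinarith [hkey, hP, hrpos]
end

section
/- Let σᵢ > σ₋ᵢ > 0, and define r₋(x) = 2σ₋ᵢ x / (σᵢ + x² + √((σᵢ + x²)² - 4σ₋ᵢ x²)) for x ≠ 0. Then |r₋(x)| ≤ √σᵢ - √(σᵢ - σ₋ᵢ) for all x ≠ 0, with equality at x = ±√σᵢ, and r₋(x) → 0 as x → 0 and as |x| → ∞. -/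
theorem stmt_8 (σi σmi : ℝ) (h1 : σmi < σi) (h2 : 0 < σmi) :
    let r : ℝ → ℝ := fun x =>
      2 * σmi * x / (σi + x ^ 2 + Real.sqrt ((σi + x ^ 2) ^ 2 - 4 * σmi * x ^ 2))
    (∀ x : ℝ, x ≠ 0 → |r x| ≤ Real.sqrt σi - Real.sqrt (σi - σmi)) ∧
      r (Real.sqrt σi) = Real.sqrt σi - Real.sqrt (σi - σmi) ∧
      r (-Real.sqrt σi) = -(Real.sqrt σi - Real.sqrt (σi - σmi)) ∧
      Filter.Tendsto r (nhdsWithin 0 {0}ᶜ) (nhds 0) ∧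
      Filter.Tendsto r Filter.atTop (nhds 0) ∧
      Filter.Tendsto r Filter.atBot (nhds 0) := by
  intro r
  have hσi : 0 < σi := h2.trans h1
  set s := Real.sqrt σi with hs_def
  set t := Real.sqrt (σi - σmi) with ht_def
  have hs2 : s ^ 2 = σi := Real.sq_sqrt hσi.le
  have ht2 : t ^ 2 = σi - σmi := Real.sq_sqrt (by linarith)
  have hs : 0 < s := Real.sqrt_pos.mpr hσi
  have ht : 0 ≤ t := Real.sqrt_nonneg _
  have hts : t < s := Real.sqrt_lt_sqrt (by linarith) (by linarith)
  have hst : (s - t) * (s + t) = σmi := by nlinarith [hs2, ht2]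
  -- denominator facts
  have hEnn : ∀ x : ℝ, 0 ≤ (σi + x ^ 2) ^ 2 - 4 * σmi * x ^ 2 := by
    intro x; nlinarith [sq_nonneg (x ^ 2 - σi), sq_nonneg x]
  have hden_pos : ∀ x : ℝ, 0 < σi + x ^ 2 + Real.sqrt ((σi + x ^ 2) ^ 2 - 4 * σmi * x ^ 2) := by
    intro x
    have := Real.sqrt_nonneg ((σi + x ^ 2) ^ 2 - 4 * σmi * x ^ 2)
    nlinarith [sq_nonneg x]
  have hsqrt_ge : ∀ x : ℝ, 2 * t * |x| ≤ Real.sqrt ((σi + x ^ 2) ^ 2 - 4 * σmi * x ^ 2) := by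
    intro x
    have h1' : (2 * t * |x|) ^ 2 ≤ (σi + x ^ 2) ^ 2 - 4 * σmi * x ^ 2 := by
      nlinarith [sq_nonneg (x ^ 2 - σi), sq_abs x, ht2]
    calc 2 * t * |x| = Real.sqrt ((2 * t * |x|) ^ 2) := (Real.sqrt_sq (by positivity)).symm
      _ ≤ _ := Real.sqrt_le_sqrt h1'
  have hden_ge : ∀ x : ℝ, 2 * |x| * (s + t) ≤
      σi + x ^ 2 + Real.sqrt ((σi + x ^ 2) ^ 2 - 4 * σmi * x ^ 2) := by
    intro x
    have h1' : 2 * s * |x| ≤ σi + x ^ 2 := by nlinarith [sq_nonneg (s - |x|), sq_abs x]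
    have h2' := hsqrt_ge x
    nlinarith
  have habs : ∀ x : ℝ, |r x| = 2 * σmi * |x| /
      (σi + x ^ 2 + Real.sqrt ((σi + x ^ 2) ^ 2 - 4 * σmi * x ^ 2)) := by
    intro x
    show |2 * σmi * x / _| = _
    rw [abs_div, abs_of_pos (hden_pos x), abs_mul, abs_of_pos (by positivity : (0:ℝ) < 2 * σmi)]
  have key : ∀ x : ℝ, x ≠ 0 → |r x| ≤ s - t := by
    intro x hx
    rw [habs x, div_le_iff₀ (hden_pos x)]
    have hxpos : 0 < |x| := abs_pos.mpr hx
    calc 2 * σmi * |x| = (s - t) * (2 * |x| * (s + t)) := by rw [← hst]; ring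
      _ ≤ (s - t) * (σi + x ^ 2 + Real.sqrt ((σi + x ^ 2) ^ 2 - 4 * σmi * x ^ 2)) := by
          apply mul_le_mul_of_nonneg_left (hden_ge x) (by linarith)
  have hrs : r s = s - t := by
    show 2 * σmi * s / _ = _
    have hE : (σi + s ^ 2) ^ 2 - 4 * σmi * s ^ 2 = (2 * s * t) ^ 2 := by
      rw [hs2]; nlinarith [ht2]
    rw [hE, Real.sqrt_sq (by positivity), hs2,
      show σi + σi + 2 * s * t = 2 * s * (s + t) from by rw [← hs2]; ring,
      show 2 * σmi * s = (s - t) * (2 * s * (s + t)) from by rw [← hst]; ring]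
    exact mul_div_cancel_right₀ _ (by positivity)
  have hodd : ∀ x : ℝ, r (-x) = - r x := by
    intro x
    show 2 * σmi * (-x) / _ = -(2 * σmi * x / _)
    rw [neg_sq, mul_neg, neg_div]
  refine ⟨key, hrs, by rw [hodd, hrs], ?_, ?_, ?_⟩
  · -- nhdsWithin
    apply Filter.Tendsto.mono_left _ nhdsWithin_le_nhds
    have hc : ContinuousAt r 0 := by
      apply ContinuousAt.div
      · fun_prop
      · apply Continuous.continuousAt
        exact (continuous_const.add (continuous_pow 2)).add
          (Real.continuous_sqrt.comp (by continuity))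
      · have : Real.sqrt ((σi + (0:ℝ) ^ 2) ^ 2 - 4 * σmi * (0:ℝ) ^ 2) = σi := by
          rw [show (σi + (0:ℝ) ^ 2) ^ 2 - 4 * σmi * (0:ℝ) ^ 2 = σi ^ 2 from by ring,
            Real.sqrt_sq hσi.le]
        simp only [this]
        positivity
    have hr0 : r 0 = 0 := by show 2 * σmi * 0 / _ = 0; rw [mul_zero, zero_div]
    simpa [hr0] using hc.tendsto
  all_goals {
    first
    | (apply squeeze_zero_norm' _
        (Filter.Tendsto.div_atTop (tendsto_const_nhds (x := 2*σmi))
          Filter.tendsto_abs_atTop_atTop)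
       filter_upwards [Filter.eventually_gt_atTop (0:ℝ)] with x hx)
    | (apply squeeze_zero_norm' _
        (Filter.Tendsto.div_atTop (tendsto_const_nhds (x := 2*σmi))
          Filter.tendsto_abs_atBot_atTop)
       filter_upwards [Filter.eventually_lt_atBot (0:ℝ)] with x hx)
    have hx0 : x ≠ 0 := by intro h; rw [h] at hx; exact lt_irrefl 0 hx
    have hxpos : 0 < |x| := abs_pos.mpr hx0
    rw [Real.norm_eq_abs, habs x, div_le_div_iff₀ (hden_pos x) hxpos]
    have hsn := Real.sqrt_nonneg ((σi + x ^ 2) ^ 2 - 4 * σmi * x ^ 2)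
    calc 2 * σmi * |x| * |x| = 2 * σmi * x ^ 2 := by
          rw [mul_assoc, abs_mul_abs_self]; ring
      _ ≤ 2 * σmi * (σi + x ^ 2 + Real.sqrt ((σi + x ^ 2) ^ 2 - 4 * σmi * x ^ 2)) :=
          mul_le_mul_of_nonneg_left (by linarith) (by positivity) }
end

section
/- Let σᵢ > σ₋ᵢ > 0, and define r₊(x) = (σᵢ + x² + √((σᵢ + x²)² - 4σ₋ᵢ x²))/(2x) for x ≠ 0. Then |r₊(x)| ≥ √σᵢ + √(σᵢ - σ₋ᵢ) for all x ≠ 0; in particular r₊ has constant sign equal to sign(x) on each half-line and never equals 0. -/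
lemma key_9 (σi σmi : ℝ) (h1 : σmi < σi) (h2 : 0 < σmi) (t : ℝ) (ht : 0 < t) :
    2 * (Real.sqrt σi + Real.sqrt (σi - σmi)) * t ≤
      σi + t ^ 2 + Real.sqrt ((σi + t ^ 2) ^ 2 - 4 * σmi * t ^ 2) := by
  have hσi : (0:ℝ) < σi := h2.trans h1
  set s := Real.sqrt σi with hs
  set u := Real.sqrt (σi - σmi) with hu
  have hs0 : 0 ≤ s := Real.sqrt_nonneg _
  have hu0 : 0 ≤ u := Real.sqrt_nonneg _
  have hs2 : s ^ 2 = σi := Real.sq_sqrt hσi.le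
  have hu2 : u ^ 2 = σi - σmi := Real.sq_sqrt (by linarith)
  have hkey : 2 * (s + u) * t - (σi + t ^ 2) ≤
      Real.sqrt ((σi + t ^ 2) ^ 2 - 4 * σmi * t ^ 2) := by
    rcases le_or_gt (2 * (s + u) * t - (σi + t ^ 2)) 0 with h | h
    · exact h.trans (Real.sqrt_nonneg _)
    · rw [show (2 * (s + u) * t - (σi + t ^ 2)) =
        Real.sqrt ((2 * (s + u) * t - (σi + t ^ 2)) ^ 2) from
        (Real.sqrt_sq h.le).symm]
      apply Real.sqrt_le_sqrt
      nlinarith [mul_nonneg (mul_nonneg ht.le (add_nonneg hs0 hu0)) (sq_nonneg (t - s)),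
        sq_nonneg (t - s), mul_nonneg hs0 hu0]
  linarith

theorem stmt_9 (σi σmi : ℝ) (h1 : σmi < σi) (h2 : 0 < σmi) :
    let r : ℝ → ℝ := fun x =>
      (σi + x ^ 2 + Real.sqrt ((σi + x ^ 2) ^ 2 - 4 * σmi * x ^ 2)) / (2 * x)
    (∀ x : ℝ, x ≠ 0 → Real.sqrt σi + Real.sqrt (σi - σmi) ≤ |r x|) ∧
      (∀ x : ℝ, 0 < x → 0 < r x) ∧
      (∀ x : ℝ, x < 0 → r x < 0) ∧
      (∀ x : ℝ, x ≠ 0 → r x ≠ 0) := by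
  intro r
  have hσi : (0:ℝ) < σi := h2.trans h1
  have hnum : ∀ x : ℝ, 0 < σi + x ^ 2 + Real.sqrt ((σi + x ^ 2) ^ 2 - 4 * σmi * x ^ 2) := by
    intro x
    have : 0 < σi + x ^ 2 := by positivity
    have := Real.sqrt_nonneg ((σi + x ^ 2) ^ 2 - 4 * σmi * x ^ 2)
    linarith
  have hpos : ∀ x : ℝ, 0 < x → 0 < r x := fun x hx =>
    div_pos (hnum x) (by linarith)
  have hneg : ∀ x : ℝ, x < 0 → r x < 0 := fun x hx =>
    div_neg_of_pos_of_neg (hnum x) (by linarith)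
  refine ⟨?_, hpos, hneg, ?_⟩
  · intro x hx
    have ht : 0 < |x| := abs_pos.mpr hx
    have habs : |r x| = (σi + x ^ 2 + Real.sqrt ((σi + x ^ 2) ^ 2 - 4 * σmi * x ^ 2)) /
        (2 * |x|) := by
      show |_ / _| = _
      rw [abs_div, abs_of_pos (hnum x), abs_mul]
      norm_num
    rw [habs, le_div_iff₀ (by positivity)]
    have := key_9 σi σmi h1 h2 |x| ht
    rw [sq_abs] at this
    linarith
  · intro x hx
    rcases hx.lt_or_gt with h | h
    · exact (hneg x h).ne
    · exact (hpos x h).ne'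
end

section
/- Let γ ∈ (0,1], σ > 0, and define W₋(x) = (γ(σ - 3x²) - √(γ²(σ + x²)² + 4γx²))/(2γx) for x ≠ 0. Then W₋ is strictly decreasing on (-∞,0) and on (0,∞); consequently, for each a ∈ ℝ the equation W₋(x) = a has at most one solution on each half-line. -/
/-!
Dividing numerator and denominator by `2γx` gives, for `x > 0`,
`W₋(x) = φ(x + σ/x) - 2x` with `φ(u) = (u - √(u² + 4/γ))/2`. Since `u ↦ √(u² + c)` is
1-Lipschitz, `φ` is monotone with slope at most `1`, while `u(x) = x + σ/x` has slope at
least `-1` when `σ ≥ 0`; so `φ ∘ u` has slope at least `-1` and the term `-2x` wins.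
`W₋` is odd, which transfers the result to `x < 0`.
-/

open Real Set

noncomputable def wMinus (γ σ x : ℝ) : ℝ :=
  (γ * (σ - 3 * x ^ 2) - √(γ ^ 2 * (σ + x ^ 2) ^ 2 + 4 * γ * x ^ 2)) / (2 * γ * x)

theorem sqrt_sq_add_sub_sqrt_sq_add_le_abs {c : ℝ} (hc : 0 ≤ c) (u v : ℝ) :
    √(u ^ 2 + c) - √(v ^ 2 + c) ≤ |u - v| := by
  have hv : |v| ≤ √(v ^ 2 + c) := abs_le_sqrt (by linarith)
  have hsq : √(v ^ 2 + c) ^ 2 = v ^ 2 + c := sq_sqrt (by positivity)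
  have hcross : v * (u - v) ≤ √(v ^ 2 + c) * |u - v| :=
    calc v * (u - v) ≤ |v| * |u - v| := by rw [← abs_mul]; exact le_abs_self _
      _ ≤ √(v ^ 2 + c) * |u - v| := by gcongr
  rw [sub_le_iff_le_add', sqrt_le_iff]
  refine ⟨by positivity, ?_⟩
  nlinarith [sq_abs (u - v)]

theorem wMinus_neg (γ σ x : ℝ) : wMinus γ σ (-x) = -wMinus γ σ x := by
  simp only [wMinus, neg_sq, mul_neg, div_neg]

theorem wMinus_eq_of_pos {γ : ℝ} (hγ : 0 < γ) (σ : ℝ) {x : ℝ} (hx : 0 < x) :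
    wMinus γ σ x = (x + σ / x - √((x + σ / x) ^ 2 + 4 / γ)) / 2 - 2 * x := by
  have hrad : γ ^ 2 * (σ + x ^ 2) ^ 2 + 4 * γ * x ^ 2 =
      (γ * x) ^ 2 * ((x + σ / x) ^ 2 + 4 / γ) := by
    field_simp
    ring
  rw [wMinus, hrad, sqrt_mul (by positivity), sqrt_sq (by positivity)]
  field_simp
  ring

theorem strictAntiOn_wMinus_Ioi {γ σ : ℝ} (hγ : 0 < γ) (hσ : 0 ≤ σ) :
    StrictAntiOn (wMinus γ σ) (Ioi 0) := by
  intro x (hx : 0 < x) y (hy : 0 < y) hxy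
  rw [wMinus_eq_of_pos hγ σ hx, wMinus_eq_of_pos hγ σ hy]
  have hlip := sqrt_sq_add_sub_sqrt_sq_add_le_abs (c := 4 / γ) (by positivity)
    (x + σ / x) (y + σ / y)
  have hu : x + σ / x - (y + σ / y) = (y - x) * (σ / (x * y) - 1) := by
    field_simp
    ring
  have hu_ge : -(y - x) ≤ x + σ / x - (y + σ / y) := by
    rw [hu]
    nlinarith [div_nonneg hσ (mul_pos hx hy).le]
  cases abs_cases (x + σ / x - (y + σ / y)) <;> linarith

theorem strictAntiOn_wMinus_Iio {γ σ : ℝ} (hγ : 0 < γ) (hσ : 0 ≤ σ) :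
    StrictAntiOn (wMinus γ σ) (Iio 0) := by
  intro x (hx : x < 0) y (hy : y < 0) hxy
  have := strictAntiOn_wMinus_Ioi hγ hσ (neg_pos.2 hy) (neg_pos.2 hx) (neg_lt_neg hxy)
  rw [wMinus_neg, wMinus_neg] at this
  linarith

theorem stmt_11_general (γ σ : ℝ) (hγ0 : 0 < γ) (hσ : 0 < σ) :
    let W : ℝ → ℝ := fun x =>
      (γ * (σ - 3 * x ^ 2) - Real.sqrt (γ ^ 2 * (σ + x ^ 2) ^ 2 + 4 * γ * x ^ 2)) / (2 * γ * x)
    StrictAntiOn W (Set.Iio 0) ∧ StrictAntiOn W (Set.Ioi 0) ∧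
      (∀ a x y : ℝ, x ∈ Set.Iio (0:ℝ) → y ∈ Set.Iio (0:ℝ) → W x = a → W y = a → x = y) ∧
      (∀ a x y : ℝ, x ∈ Set.Ioi (0:ℝ) → y ∈ Set.Ioi (0:ℝ) → W x = a → W y = a → x = y) := by
  intro W
  have hneg : StrictAntiOn W (Iio 0) := strictAntiOn_wMinus_Iio hγ0 hσ.le
  have hpos : StrictAntiOn W (Ioi 0) := strictAntiOn_wMinus_Ioi hγ0 hσ.le
  exact ⟨hneg, hpos, fun _ _ _ hx hy hxa hya => hneg.injOn hx hy (hxa.trans hya.symm),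
    fun _ _ _ hx hy hxa hya => hpos.injOn hx hy (hxa.trans hya.symm)⟩

theorem stmt_11 (γ σ : ℝ) (hγ0 : 0 < γ) (hγ1 : γ ≤ 1) (hσ : 0 < σ) :
    let W : ℝ → ℝ := fun x =>
      (γ * (σ - 3 * x ^ 2) - Real.sqrt (γ ^ 2 * (σ + x ^ 2) ^ 2 + 4 * γ * x ^ 2)) / (2 * γ * x)
    StrictAntiOn W (Set.Iio 0) ∧ StrictAntiOn W (Set.Ioi 0) ∧
      (∀ a x y : ℝ, x ∈ Set.Iio (0:ℝ) → y ∈ Set.Iio (0:ℝ) → W x = a → W y = a → x = y) ∧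
      (∀ a x y : ℝ, x ∈ Set.Ioi (0:ℝ) → y ∈ Set.Ioi (0:ℝ) → W x = a → W y = a → x = y) :=
  stmt_11_general γ σ hγ0 hσ
end

section
/- Let γ ∈ (0,1], σ > 0, a ≠ 0, and let Δ = (γa² - 1)² - 4γ²σa². Then Δ > 0 if and only if |a| < √(σ + 1/γ) - √σ or |a| > √(σ + 1/γ) + √σ. -/
theorem stmt_12 (γ σ a : ℝ) (hγ0 : 0 < γ) (hγ1 : γ ≤ 1) (hσ : 0 < σ) (ha : a ≠ 0) :
    0 < (γ * a ^ 2 - 1) ^ 2 - 4 * γ ^ 2 * σ * a ^ 2 ↔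
      |a| < Real.sqrt (σ + 1 / γ) - Real.sqrt σ ∨
        |a| > Real.sqrt (σ + 1 / γ) + Real.sqrt σ := by
  set s := Real.sqrt σ with hsdef
  set t := Real.sqrt (σ + 1 / γ) with htdef
  have hγ' : 0 < 1 / γ := by positivity
  have hs : s ^ 2 = σ := Real.sq_sqrt hσ.le
  have ht : t ^ 2 = σ + 1 / γ := Real.sq_sqrt (by positivity)
  have ht' : γ * t ^ 2 = γ * σ + 1 := by rw [ht]; field_simp
  have hs0 : 0 < s := Real.sqrt_pos.mpr hσ
  have hst : s < t := Real.sqrt_lt_sqrt hσ.le (by linarith)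
  have hx0 : 0 < |a| := abs_pos.mpr ha
  have hx2 : |a| ^ 2 = a ^ 2 := sq_abs a
  set x := |a| with hxdef
  have hγ2 : 0 < γ ^ 2 := by positivity
  have key : (γ * a ^ 2 - 1) ^ 2 - 4 * γ ^ 2 * σ * a ^ 2 =
      γ ^ 2 * ((x - s - t) * (x - s + t) * (x + s - t) * (x + s + t)) := by
    linear_combination (4 * γ ^ 2 * x ^ 2 - γ * (2 * γ * x ^ 2 - 1 + γ * s ^ 2 - γ * t ^ 2)) * hs
      + (2 * γ * x ^ 2 - 1 + γ * s ^ 2 - γ * t ^ 2) * ht'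
      + (-(γ * (γ * a ^ 2 + γ * x ^ 2 - 2) - 4 * γ ^ 2 * σ)) * hx2
  rw [key]
  constructor
  · intro h
    by_contra hc
    push_neg at hc
    obtain ⟨h1, h2⟩ := hc
    have hP : 0 ≤ (t + s - x) * ((x - s + t) * ((x + s - t) * (x + s + t))) := by
      apply mul_nonneg (by linarith)
      apply mul_nonneg (by linarith)
      apply mul_nonneg (by linarith) (by linarith)
    nlinarith [mul_nonneg hγ2.le hP]
  · rintro (h | h)
    · have hP : 0 < (t + s - x) * ((x - s + t) * ((t - s - x) * (x + s + t))) := by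
        apply mul_pos (by linarith)
        apply mul_pos (by linarith)
        apply mul_pos (by linarith) (by linarith)
      nlinarith [mul_pos hγ2 hP]
    · have hP : 0 < (x - s - t) * ((x - s + t) * ((x + s - t) * (x + s + t))) := by
        apply mul_pos (by linarith)
        apply mul_pos (by linarith)
        apply mul_pos (by linarith) (by linarith)
      nlinarith [mul_pos hγ2 hP]
end

section
/- Let γ ∈ (0,1], σ > 0, x ≠ 0, and set P = σ + x², S = √(γ²P² + 4γx²). Then D(x) := -P²S + γP³ + 2σx² + 6x⁴ satisfies D(x) ≥ 4x⁴ > 0. -/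
theorem stmt_15 (γ σ : ℝ) (hγ0 : 0 < γ) (hγ1 : γ ≤ 1) (hσ : 0 < σ)
    (x : ℝ) (hx : x ≠ 0) :
    let P : ℝ := σ + x ^ 2
    let S : ℝ := Real.sqrt (γ ^ 2 * P ^ 2 + 4 * γ * x ^ 2)
    4 * x ^ 4 ≤ -(P ^ 2) * S + γ * P ^ 3 + 2 * σ * x ^ 2 + 6 * x ^ 4 ∧
      0 < 4 * x ^ 4 := by
  intro P S
  have hx2 : 0 < x ^ 2 := by positivity
  have hP : 0 < P := by positivity
  have hS : S ≤ γ * P + 2 * x ^ 2 / P := by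
    have h1 : γ ^ 2 * P ^ 2 + 4 * γ * x ^ 2 ≤ (γ * P + 2 * x ^ 2 / P) ^ 2 := by
      have he : (γ * P + 2 * x ^ 2 / P) ^ 2
          = γ ^ 2 * P ^ 2 + 4 * γ * x ^ 2 + (2 * x ^ 2 / P) ^ 2 := by
        field_simp; ring
      nlinarith [sq_nonneg (2 * x ^ 2 / P)]
    calc S ≤ Real.sqrt ((γ * P + 2 * x ^ 2 / P) ^ 2) := Real.sqrt_le_sqrt h1
      _ = γ * P + 2 * x ^ 2 / P := Real.sqrt_sq (by positivity)
  refine ⟨?_, by positivity⟩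
  have h2 : P ^ 2 * S ≤ P ^ 2 * (γ * P + 2 * x ^ 2 / P) :=
    mul_le_mul_of_nonneg_left hS (by positivity)
  have h3 : P ^ 2 * (γ * P + 2 * x ^ 2 / P) = γ * P ^ 3 + 2 * x ^ 2 * P := by
    field_simp
  have hPdef : P = σ + x ^ 2 := rfl
  have h4 : P ^ 2 * S ≤ γ * P ^ 3 + 2 * x ^ 2 * P := h3 ▸ h2
  have h5 : 2 * x ^ 2 * P = 2 * σ * x ^ 2 + 2 * x ^ 4 := by rw [hPdef]; ring
  linarith
end

section
/- Let γ ∈ (0,1], σ > 0, x ≠ 0, and define C(x) = (σ - x²)·(-(σ+x²)²√(γ²(σ+x²)² + 4γx²) + γ(σ+x²)³ + 2σx² + 6x⁴). Then C(x) < 0 if and only if |x| > √σ. -/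
theorem stmt_16 (γ σ : ℝ) (hγ0 : 0 < γ) (hγ1 : γ ≤ 1) (hσ : 0 < σ)
    (x : ℝ) (hx : x ≠ 0) :
    (σ - x ^ 2) *
        (-((σ + x ^ 2) ^ 2) * Real.sqrt (γ ^ 2 * (σ + x ^ 2) ^ 2 + 4 * γ * x ^ 2)
          + γ * (σ + x ^ 2) ^ 3 + 2 * σ * x ^ 2 + 6 * x ^ 4) < 0 ↔
      Real.sqrt σ < |x| := by
  have hx2 : 0 < x ^ 2 := by positivity
  set s := σ + x ^ 2 with hs
  have hspos : 0 < s := by positivity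
  have hA : 0 ≤ γ ^ 2 * s ^ 2 + 4 * γ * x ^ 2 := by positivity
  set t := Real.sqrt (γ ^ 2 * s ^ 2 + 4 * γ * x ^ 2) with ht
  have ht0 : 0 ≤ t := Real.sqrt_nonneg _
  have ht2 : t ^ 2 = γ ^ 2 * s ^ 2 + 4 * γ * x ^ 2 := Real.sq_sqrt hA
  have hB : 0 < γ * s ^ 3 + 2 * σ * x ^ 2 + 6 * x ^ 4 := by positivity
  have h1 : s ^ 2 * t = Real.sqrt (s ^ 4 * (γ ^ 2 * s ^ 2 + 4 * γ * x ^ 2)) := by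
    rw [Real.sqrt_mul (by positivity : (0:ℝ) ≤ s ^ 4), ht,
      show s ^ 4 = (s ^ 2) ^ 2 by ring, Real.sqrt_sq (by positivity)]
  have key : s ^ 2 * t < γ * s ^ 3 + 2 * σ * x ^ 2 + 6 * x ^ 4 := by
    rw [h1]
    refine (Real.sqrt_lt' hB).mpr ?_
    nlinarith [mul_pos (mul_pos hγ0 (mul_pos hx2 hx2)) (mul_pos hspos (mul_pos hspos hspos)),
      sq_nonneg (2 * σ * x ^ 2 + 6 * x ^ 4)]
  have hF : 0 < -(s ^ 2) * t + γ * s ^ 3 + 2 * σ * x ^ 2 + 6 * x ^ 4 := by linarith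
  constructor
  · intro h
    have hσx : σ < x ^ 2 := by nlinarith
    rw [← Real.sqrt_sq_eq_abs]
    exact Real.sqrt_lt_sqrt hσ.le hσx
  · intro h
    have hσx : σ < x ^ 2 := by
      have := (Real.sqrt_lt' (abs_pos.mpr hx)).mp h
      simpa [sq_abs] using this
    nlinarith
end

section
/- Let γ ∈ (0,1], σ > 0, a > 0, x < 0 with x ≠ 0. Define g(x) = (γ(x² - σ) - √(γ²(σ + x²)² + 4γx²))/(2γx). Then g(x) ≥ -σ/x; in particular g(x) > 0 for x ∈ (-a, 0). -/
theorem stmt_17 (γ σ a : ℝ) (hγ0 : 0 < γ) (hγ1 : γ ≤ 1) (hσ : 0 < σ) (ha : 0 < a)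
    (x : ℝ) (hx : x < 0) :
    let g : ℝ := (γ * (x ^ 2 - σ) - Real.sqrt (γ ^ 2 * (σ + x ^ 2) ^ 2 + 4 * γ * x ^ 2))
      / (2 * γ * x)
    g ≥ -σ / x ∧ (-a < x → 0 < g) := by
  intro g
  have hsx : 0 < σ + x ^ 2 := by nlinarith [sq_nonneg x]
  have h1 : γ * (σ + x ^ 2) ≤ Real.sqrt (γ ^ 2 * (σ + x ^ 2) ^ 2 + 4 * γ * x ^ 2) := by
    have h2 : Real.sqrt ((γ * (σ + x ^ 2)) ^ 2) ≤
        Real.sqrt (γ ^ 2 * (σ + x ^ 2) ^ 2 + 4 * γ * x ^ 2) := by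
      apply Real.sqrt_le_sqrt
      nlinarith [sq_nonneg x]
    rwa [Real.sqrt_sq (by positivity)] at h2
  have hden : 2 * γ * x < 0 := by nlinarith
  have hmain : g ≥ -σ / x := by
    have hnum : γ * (x ^ 2 - σ) - Real.sqrt (γ ^ 2 * (σ + x ^ 2) ^ 2 + 4 * γ * x ^ 2)
        + 2 * γ * σ ≤ 0 := by nlinarith
    have hdiff : g - (-σ / x) =
        (γ * (x ^ 2 - σ) - Real.sqrt (γ ^ 2 * (σ + x ^ 2) ^ 2 + 4 * γ * x ^ 2)
          + 2 * γ * σ) / (2 * γ * x) := by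
      unfold g
      rw [div_sub_div _ _ (ne_of_lt hden) (ne_of_lt hx)]
      rw [div_eq_div_iff (by nlinarith [mul_pos_of_neg_of_neg hx hx] : (0:ℝ) < 2 * γ * x * x).ne' (ne_of_lt hden)]
      ring
    have : 0 ≤ g - (-σ / x) := by
      rw [hdiff]
      rw [div_nonneg_iff]
      exact Or.inr ⟨hnum, hden.le⟩
    linarith
  refine ⟨hmain, fun _ => ?_⟩
  have : 0 < -σ / x := by
    rw [div_pos_iff]
    right
    constructor <;> linarith
  linarith
end

section
/- Let γ ∈ (0,1], σ > 0, a > √σ + √(σ + 1/γ), and let x_s ∈ (-a, 0) be a root of the cubic 2γx³ + 3aγx² + x(a²γ - 2σγ - 1) - aσγ = 0 with |a + 2x_s| < 1, and let x_{h1} ≤ x_{h2} be the roots of -aγx² + x(1 - a²γ) - aσγ = 0. Then x_{h1} < x_s < x_{h2}. -/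
set_option maxHeartbeats 1000000 in
lemma key_F (γ σ a s : ℝ) (hγ0 : 0 < γ) (hγ1 : γ ≤ 1) (hσ : 0 < σ) (ha : 0 < a)
    (hblt : 2*σ*γ+1 < γ*a^2) (hD : 4*γ^2*σ*a^2 < (γ*a^2-1)^2)
    (hs0 : 0 < s) (hs1 : s < 1)
    (hG : γ*s^3 - (a^2*γ+4*σ*γ+2)*s + 2*a = 0) :
    0 < s^2 - 2*a*(2*σ*γ+1)*s + a^2 := by
  obtain ⟨t, ht⟩ : ∃ t:ℝ, t = 2*σ*γ+1 := ⟨_, rfl⟩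
  obtain ⟨b, hb⟩ : ∃ b:ℝ, b = γ*a^2 := ⟨_, rfl⟩
  obtain ⟨v, hv⟩ : ∃ v:ℝ, v = γ*s^2 := ⟨_, rfl⟩
  obtain ⟨c, hc⟩ : ∃ c:ℝ, c = b - v := ⟨_, rfl⟩
  have ht1 : 1 < t := by rw [ht]; nlinarith [mul_pos hσ hγ0]
  have htsq : (0:ℝ) ≤ t^2 - 1 := by nlinarith
  obtain ⟨e, he⟩ : ∃ e:ℝ, e = Real.sqrt (t^2-1) := ⟨_, rfl⟩
  have he2 : e^2 = t^2 - 1 := by rw [he]; exact Real.sq_sqrt htsq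
  have he0 : 0 ≤ e := by rw [he]; exact Real.sqrt_nonneg _
  have hs2 : s^2 < 1 := by nlinarith
  have hv1 : v < 1 := by rw [hv]; nlinarith [sq_nonneg s]
  have hv0 : 0 < v := by rw [hv]; positivity
  have hbt : t < b := by rw [ht, hb]; exact hblt
  have hDb : 1 + 2*t*b < b^2 + 2*b := by rw [ht, hb]; nlinarith [hD]
  have hbte : t + e < b := by nlinarith [hDb, he2, he0, hbt]
  have hc0 : 0 < c := by rw [hc]; linarith
  have hD0 : 0 < (c+2*t)^2 - 4 := by nlinarith [hc0, ht1]
  have hId : v*((c+2*t)^2-4) = 4*c := by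
    rw [hc, hv, hb, ht]
    linear_combination (-γ*(s*(γ*a^2 - γ*s^2 + 2*(2*σ*γ+1)) + 2*a)) * hG
  have hexpand : (1 - v*(t+e))*((c+2*t)^2-4) = (c-2*e)^2 := by
    linear_combination (-(t+e))*hId - 4*he2
  have hvte : v*(t+e) ≤ 1 := by nlinarith [hexpand, sq_nonneg (c-2*e), hD0]
  have hvle : v ≤ t - e := by nlinarith [hvte, he2, he0, ht1]
  have hce : 2*e < c := by rw [hc]; linarith
  have hcsq : 4*t^2 - 4 < c^2 := by nlinarith [hce, he2, he0]
  have hF4 : 4*(s^2 - 2*a*(2*σ*γ+1)*s + a^2) = s^2*(c^2 - 4*t^2 + 4) := by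
    rw [hc, hv, hb, ht]
    linear_combination (2*a + s*(γ*a^2 - γ*s^2 + 2*(2*σ*γ+1)) - 4*(2*σ*γ+1)*s) * hG
  nlinarith [hF4, mul_pos (mul_pos hs0 hs0) (show (0:ℝ) < c^2-4*t^2+4 by linarith)]

lemma aux_blt (γ σ a r1 r2 : ℝ) (hγ0 : 0 < γ) (hγinv : γ * (1/γ) = 1)
    (hr1 : r1^2 = σ) (hr2 : r2^2 = σ + 1/γ) (hr1n : 0 ≤ r1) (hr2n : 0 ≤ r2)
    (ha' : r1 + r2 < a) : 2*σ*γ+1 < γ*a^2 := by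
  have ha0 : 0 < a := by linarith
  have haa : (r1+r2)^2 < a^2 := by nlinarith
  nlinarith [mul_lt_mul_of_pos_left haa hγ0, mul_nonneg (mul_nonneg hγ0.le hr1n) hr2n]

lemma aux_D (γ σ a r1 r2 : ℝ) (hγ0 : 0 < γ) (hγinv : γ * (1/γ) = 1)
    (hr1 : r1^2 = σ) (hr2 : r2^2 = σ + 1/γ) (hr1n : 0 ≤ r1) (hr2n : 0 ≤ r2)
    (ha' : r1 + r2 < a) : 4*γ^2*σ*a^2 < (γ*a^2-1)^2 := by
  have ha0 : 0 < a := by linarith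
  have h3 : r2^2 < (a-r1)^2 := by nlinarith
  have h4 : 2*γ*r1*a < γ*a^2 - 1 := by
    nlinarith [mul_lt_mul_of_pos_left h3 hγ0]
  have h5 : 0 ≤ 2*γ*r1*a := by positivity
  have h6 : (2*γ*r1*a)^2 < (γ*a^2-1)^2 := by nlinarith [h4, h5]
  have hr1sq : 4*γ^2*σ*a^2 = (2*γ*r1*a)^2 := by rw [← hr1]; ring
  rw [hr1sq]; exact h6

lemma aux_s0 (γ σ a s : ℝ) (hγ0 : 0 < γ) (hγ1 : γ ≤ 1) (hσ : 0 < σ) (ha0 : 0 < a)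
    (hs2 : s^2 < 1)
    (hG : γ*s^3 - (a^2*γ+4*σ*γ+2)*s + 2*a = 0) : 0 < s := by
  have hfac : 0 < a^2*γ+4*σ*γ+2-γ*s^2 := by
    have h1 : γ*s^2 < γ := by nlinarith
    have h2 : 0 < a^2*γ := by positivity
    have h3 : 0 < 4*σ*γ := by positivity
    linarith
  nlinarith [hG, hfac, ha0]

lemma aux_lt (γ σ a s : ℝ) (hγ0 : 0 < γ) (ha0 : 0 < a) (hs0 : 0 < s)
    (hG : γ*s^3 - (a^2*γ+4*σ*γ+2)*s + 2*a = 0)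
    (hF : 0 < s^2 - 2*a*(2*σ*γ+1)*s + a^2) :
    (γ*a*s-1)^2 < (γ*a^2-1)^2 - 4*γ^2*σ*a^2 := by
  have hid2 : s*(((γ*a^2-1)^2 - 4*γ^2*σ*a^2) - (γ*a*s-1)^2)
      = 2*γ*a*(s^2 - 2*a*(2*σ*γ+1)*s + a^2)
        - γ*a^2*(γ*s^3 - (a^2*γ+4*σ*γ+2)*s + 2*a) := by ring
  have hGa : γ*a^2*(γ*s^3 - (a^2*γ+4*σ*γ+2)*s + 2*a) = 0 := by rw [hG, mul_zero]
  nlinarith [hid2, hGa, hF, hs0, mul_pos (mul_pos hγ0 ha0) hF]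

set_option maxHeartbeats 1000000 in
theorem stmt_19 (γ σ a : ℝ) (hγ0 : 0 < γ) (hγ1 : γ ≤ 1) (hσ : 0 < σ)
    (ha : a > Real.sqrt σ + Real.sqrt (σ + 1 / γ))
    (xs : ℝ) (hxs : xs ∈ Set.Ioo (-a) 0)
    (hroot : 2 * γ * xs ^ 3 + 3 * a * γ * xs ^ 2
        + xs * (a ^ 2 * γ - 2 * σ * γ - 1) - a * σ * γ = 0)
    (hstab : |a + 2 * xs| < 1) :
    let Δ : ℝ := (γ * a ^ 2 - 1) ^ 2 - 4 * γ ^ 2 * σ * a ^ 2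
    let xh1 : ℝ := (1 - a ^ 2 * γ - Real.sqrt Δ) / (2 * a * γ)
    let xh2 : ℝ := (1 - a ^ 2 * γ + Real.sqrt Δ) / (2 * a * γ)
    xh1 < xs ∧ xs < xh2 := by
  intro Δ xh1 xh2
  have hγinv : γ * (1/γ) = 1 := by field_simp
  obtain ⟨r1, hr1d⟩ : ∃ r:ℝ, r = Real.sqrt σ := ⟨_, rfl⟩
  obtain ⟨r2, hr2d⟩ : ∃ r:ℝ, r = Real.sqrt (σ + 1/γ) := ⟨_, rfl⟩
  have hr1 : r1^2 = σ := by rw [hr1d]; exact Real.sq_sqrt hσ.le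
  have hr2 : r2^2 = σ + 1/γ := by rw [hr2d]; exact Real.sq_sqrt (by positivity)
  have hr1n : 0 ≤ r1 := by rw [hr1d]; exact Real.sqrt_nonneg _
  have hr2n : 0 ≤ r2 := by rw [hr2d]; exact Real.sqrt_nonneg _
  have ha' : r1 + r2 < a := by rw [hr1d, hr2d]; exact ha
  have ha0 : 0 < a := by linarith only [ha', hr1n, hr2n]
  have hblt : 2*σ*γ+1 < γ*a^2 := aux_blt γ σ a r1 r2 hγ0 hγinv hr1 hr2 hr1n hr2n ha'
  have hD : 4*γ^2*σ*a^2 < (γ*a^2-1)^2 := aux_D γ σ a r1 r2 hγ0 hγinv hr1 hr2 hr1n hr2n ha'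
  obtain ⟨s, hsd⟩ : ∃ s:ℝ, s = a + 2*xs := ⟨_, rfl⟩
  obtain ⟨hsl, hsu⟩ := abs_lt.mp hstab
  have hs1 : s < 1 := by rw [hsd]; linarith only [hsu]
  have hs2 : s^2 < 1 := by
    rw [hsd]
    nlinarith [hsl, hsu]
  have hG : γ*s^3 - (a^2*γ+4*σ*γ+2)*s + 2*a = 0 := by
    rw [hsd]; linear_combination 4*hroot
  have hs0 : 0 < s := aux_s0 γ σ a s hγ0 hγ1 hσ ha0 hs2 hG
  have hF : 0 < s^2 - 2*a*(2*σ*γ+1)*s + a^2 :=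
    key_F γ σ a s hγ0 hγ1 hσ ha0 hblt hD hs0 hs1 hG
  have hlt : (γ*a*s-1)^2 < (γ*a^2-1)^2 - 4*γ^2*σ*a^2 :=
    aux_lt γ σ a s hγ0 ha0 hs0 hG hF
  have hsq : |γ*a*s - 1| < Real.sqrt Δ := by
    rw [← Real.sqrt_sq_eq_abs]
    exact Real.sqrt_lt_sqrt (sq_nonneg _) (by
      show (γ*a*s-1)^2 < (γ * a ^ 2 - 1) ^ 2 - 4 * γ ^ 2 * σ * a ^ 2
      exact hlt)
  obtain ⟨habs1, habs2⟩ := abs_lt.mp hsq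
  have h2aγ : 0 < 2*a*γ := by positivity
  have hx2 : γ*a*s - γ*a^2 = xs * (2*a*γ) := by rw [hsd]; ring
  constructor
  · show (1 - a ^ 2 * γ - Real.sqrt Δ) / (2 * a * γ) < xs
    rw [div_lt_iff₀ h2aγ]
    linarith only [habs1, hx2]
  · show xs < (1 - a ^ 2 * γ + Real.sqrt Δ) / (2 * a * γ)
    rw [lt_div_iff₀ h2aγ]
    linarith only [habs2, hx2]
end
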